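/- Let R be a finite index set and let (L_r)_{r∈R} be mutually independent nonnegative real-valued random variables on a common probability space with 0 ≤ L_r ≤ m_r·n_r almost surely, where n_r are natural numbers, 0 < ε < 1, and m_r are constants with 0 < m_r ≤ ε·d for a constant d > 0. Suppose E[∑_{r∈R} L_r] ≤ 2·d and set Δ_E := ∑_{r∈R} n_r². Then for every real n ≥ 1, P( ∑_{r∈R} L_r ≥ (2 + ε·√((3/2)·(log n)·Δ_E))·d ) ≤ n^{−2}. -/

import Mathlib

/-!
Each centred load `L r - E[L r]` takes values in an interval of length `m r * n r ≤ ε d n r`, so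
by Hoeffding's lemma it is sub-Gaussian, and Hoeffding's inequality bounds the probability that
`∑ L r` exceeds its mean (at most `2 d`) by `s` by `exp (-2 s² / ∑ (m r n r)²)
≤ exp (-2 s² / (ε² d² Δ_E))`. For `s = ε d √((3/2) log n Δ_E)` this is `n⁻³ ≤ n⁻²`.
When all `m r n r` vanish the loads are a.s. zero and the event is null.
-/

open MeasureTheory ProbabilityTheory Real

theorem measureReal_sum_ge_le_of_iIndepFun_of_mem_Icc {Ω ι : Type*} [MeasurableSpace Ω]
    {μ : Measure Ω} [IsProbabilityMeasure μ] [Fintype ι] {X : ι → Ω → ℝ}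
    (hindep : iIndepFun X μ) (hmeas : ∀ i, AEMeasurable (X i) μ) {a b : ι → ℝ}
    (hX : ∀ i, ∀ᵐ ω ∂μ, X i ω ∈ Set.Icc (a i) (b i)) {t : ℝ} (ht : 0 ≤ t) :
    μ.real {ω | ∑ i, μ[X i] + t ≤ ∑ i, X i ω} ≤ exp (-2 * t ^ 2 / ∑ i, (b i - a i) ^ 2) := by
  have hcentered : iIndepFun (fun i ω => X i ω - μ[X i]) μ :=
    hindep.comp (fun i y => y - ∫ ω, X i ω ∂μ) fun _ => measurable_sub_const _
  have hoeffding := HasSubgaussianMGF.measure_sum_ge_le_of_iIndepFun hcentered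
    (s := Finset.univ) (fun i _ => hasSubgaussianMGF_of_mem_Icc (hmeas i) (hX i)) ht
  convert hoeffding using 2
  · ext ω
    simp only [Set.mem_ofPred_eq, Finset.sum_sub_distrib]
    constructor <;> intro h <;> linarith
  · push_cast
    simp only [Real.norm_eq_abs, div_pow, sq_abs, ← Finset.sum_div]
    field_simp

theorem exp_neg_two_mul_sq_div_le_rpow_neg_two {n B Δ c : ℝ} (hn : 1 ≤ n) (hB : 0 < B)
    (hBΔ : B ≤ c ^ 2 * Δ) : exp (-2 * (c * √((3 / 2) * log n * Δ)) ^ 2 / B) ≤ n ^ (-2 : ℝ) := by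
  have hΔ : 0 < Δ := pos_of_mul_pos_right (hB.trans_le hBΔ) (sq_nonneg c)
  have hlog : 0 ≤ log n := log_nonneg hn
  rw [rpow_def_of_pos (by linarith), mul_pow, sq_sqrt (by positivity), exp_le_exp,
    div_le_iff₀ hB]
  nlinarith [mul_le_mul_of_nonneg_left hBΔ hlog]

theorem sum_mul_sq_le_sq_mul_sum_sq {ι : Type*} (s : Finset ι) {f g : ι → ℝ} {c : ℝ}
    (hf : ∀ i ∈ s, 0 ≤ f i ∧ f i ≤ c) : ∑ i ∈ s, (f i * g i) ^ 2 ≤ c ^ 2 * ∑ i ∈ s, g i ^ 2 := by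
  rw [Finset.mul_sum]
  refine Finset.sum_le_sum fun i hi => ?_
  rw [mul_pow]
  exact mul_le_mul_of_nonneg_right (pow_le_pow_left₀ (hf i hi).1 (hf i hi).2 2) (sq_nonneg _)

theorem measure_le_sum_eq_zero_of_ae_nonpos {Ω ι : Type*} [MeasurableSpace Ω] {μ : Measure Ω}
    [Fintype ι] {X : ι → Ω → ℝ} (hX : ∀ i, ∀ᵐ ω ∂μ, X i ω ≤ 0) {a : ℝ} (ha : 0 < a) :
    μ {ω | a ≤ ∑ i, X i ω} = 0 := by
  refine measure_eq_zero_iff_ae_notMem.2 ?_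
  filter_upwards [ae_all_iff.2 hX] with ω hω
  exact not_le.2 ((Finset.sum_nonpos fun i _ => hω i).trans_lt ha)

theorem edge_capacity_violation_cost_eps_general {Ω : Type*} [MeasurableSpace Ω] (μ : Measure Ω)
    [IsProbabilityMeasure μ]
    {R : Type*} [Fintype R] (L : R → Ω → ℝ) (m : R → ℝ) (nE : R → ℕ) (d ε : ℝ)
    (hmeas : ∀ r, Measurable (L r))
    (hindep : iIndepFun L μ)
    (hbdd : ∀ r, ∀ᵐ ω ∂μ, 0 ≤ L r ω ∧ L r ω ≤ m r * (nE r : ℝ))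
    (hd : 0 < d)
    (hε0 : 0 < ε)
    (hm : ∀ r, 0 < m r ∧ m r ≤ ε * d)
    (hE : ∫ ω, ∑ r, L r ω ∂μ ≤ 2 * d) :
    ∀ n : ℝ, 1 ≤ n →
      μ {ω | (2 + ε * Real.sqrt ((3 / 2) * Real.log n * ∑ r, ((nE r : ℝ)) ^ 2)) * d
              ≤ ∑ r, L r ω}
        ≤ ENNReal.ofReal (n ^ (-2 : ℝ)) := by
  intro n hn
  set Δ := ∑ r, ((nE r : ℝ)) ^ 2
  have hIcc : ∀ r, ∀ᵐ ω ∂μ, L r ω ∈ Set.Icc 0 (m r * nE r) := hbdd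
  have hint : ∀ r, Integrable (L r) μ := fun r =>
    Integrable.of_mem_Icc _ _ (hmeas r).aemeasurable (hIcc r)
  rw [integral_finsetSum _ fun r _ => hint r] at hE
  rcases (Finset.sum_nonneg fun r _ => sq_nonneg (m r * nE r)).eq_or_lt with hB | hB
  · have hb : ∀ r, m r * nE r = 0 := fun r => pow_eq_zero_iff two_ne_zero |>.1 <|
      (Finset.sum_eq_zero_iff_of_nonneg fun r _ => sq_nonneg _).1 hB.symm r (Finset.mem_univ r)
    refine (measure_le_sum_eq_zero_of_ae_nonpos (fun r => ?_) (by positivity)).trans_le zero_le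
    filter_upwards [hbdd r] with ω hω
    exact hω.2.trans (hb r).le
  · have hBΔ : ∑ r, (m r * nE r) ^ 2 ≤ (ε * d) ^ 2 * Δ :=
      sum_mul_sq_le_sq_mul_sum_sq _ fun r _ => ⟨(hm r).1.le, (hm r).2⟩
    set s := ε * d * √((3 / 2) * log n * Δ)
    have hsub : {ω | (2 + ε * √((3 / 2) * log n * Δ)) * d ≤ ∑ r, L r ω} ⊆
        {ω | ∑ r, μ[L r] + s ≤ ∑ r, L r ω} := fun ω hω => by
      simp only [Set.mem_ofPred_eq] at hω ⊢
      linarith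
    have hoeffding := measureReal_sum_ge_le_of_iIndepFun_of_mem_Icc hindep
      (fun r => (hmeas r).aemeasurable) hIcc (by positivity : 0 ≤ s)
    simp only [sub_zero] at hoeffding
    calc _ ≤ ENNReal.ofReal (μ.real {ω | ∑ r, μ[L r] + s ≤ ∑ r, L r ω}) := by
          rw [ofReal_measureReal]; exact measure_mono hsub
      _ ≤ _ := ENNReal.ofReal_le_ofReal
          (hoeffding.trans (exp_neg_two_mul_sq_div_le_rpow_neg_two hn hB hBΔ))

/-- Sharpened edge capacity violation bound in the cost-minimization variant under
the stronger demand assumption `m r ≤ ε * d` with `0 < ε < 1`: the probability of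
exceeding `(2 + ε √((3/2) (log n) Δ_E)) d` is at most `n⁻²`. -/
theorem edge_capacity_violation_cost_eps {Ω : Type*} [MeasurableSpace Ω] (μ : Measure Ω)
    [IsProbabilityMeasure μ]
    {R : Type*} [Fintype R] (L : R → Ω → ℝ) (m : R → ℝ) (nE : R → ℕ) (d ε : ℝ)
    (hmeas : ∀ r, Measurable (L r))
    (hindep : iIndepFun L μ)
    (hbdd : ∀ r, ∀ᵐ ω ∂μ, 0 ≤ L r ω ∧ L r ω ≤ m r * (nE r : ℝ))
    (hd : 0 < d)
    (hε0 : 0 < ε) (hε1 : ε < 1)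
    (hm : ∀ r, 0 < m r ∧ m r ≤ ε * d)
    (hE : ∫ ω, ∑ r, L r ω ∂μ ≤ 2 * d) :
    ∀ n : ℝ, 1 ≤ n →
      μ {ω | (2 + ε * Real.sqrt ((3 / 2) * Real.log n * ∑ r, ((nE r : ℝ)) ^ 2)) * d
              ≤ ∑ r, L r ω}
        ≤ ENNReal.ofReal (n ^ (-2 : ℝ)) :=
  edge_capacity_violation_cost_eps_general μ L m nE d ε hmeas hindep hbdd hd hε0 hm hE
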